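/- Suppose U and W are graphons with U ≺ W. Then ‖U‖₂ < ‖W‖₂, where ‖·‖₂ denotes the L² norm on [0,1]². -/

import Mathlib

open MeasureTheory

attribute [local instance] Classical.propDecidable

noncomputable section

/-- The unit interval `[0,1]`, equipped with the (restricted) Lebesgue measure. -/
abbrev UI : Type := Set.Icc (0:ℝ) 1

/-- A graphon: a symmetric measurable function `[0,1]² → [0,1]`. -/
def IsGraphon (W : UI → UI → ℝ) : Prop :=
  Measurable (Function.uncurry W) ∧ (∀ x y, W x y = W y x) ∧
    ∀ x y, W x y ∈ Set.Icc (0:ℝ) 1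

/-- A kernel: a bounded symmetric measurable function `[0,1]² → ℝ`. -/
def IsKernel (W : UI → UI → ℝ) : Prop :=
  Measurable (Function.uncurry W) ∧ (∀ x y, W x y = W y x) ∧
    ∃ C : ℝ, ∀ x y, |W x y| ≤ C

/-- The cut norm `‖W‖_□`. -/
def cutNorm (W : UI → UI → ℝ) : ℝ :=
  sSup { r : ℝ | ∃ S T : Set UI, MeasurableSet S ∧ MeasurableSet T ∧
    r = |∫ x in S, ∫ y in T, W x y| }

/-- A measure preserving bijection of `[0,1]`. -/
structure MPB where
  toFun : UI → UI
  bijective : Function.Bijective toFun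
  measurePreserving : MeasurePreserving toFun

/-- The version `W^φ` of `W`. -/
def vers (W : UI → UI → ℝ) (φ : UI → UI) : UI → UI → ℝ := fun x y => W (φ x) (φ y)

/-- The cut distance `δ_□(U,W)`. -/
def cutDist (U W : UI → UI → ℝ) : ℝ :=
  ⨅ φ : MPB, cutNorm (fun x y => U x y - vers W φ.toFun x y)

/-- Weak* convergence of a sequence of (bounded measurable) functions on `[0,1]²`:
convergence of integrals over all products of measurable sets. -/
def WeakStarTendsto (Wn : ℕ → UI → UI → ℝ) (W : UI → UI → ℝ) : Prop :=
  ∀ S T : Set UI, MeasurableSet S → MeasurableSet T →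
    Filter.Tendsto (fun n => ∫ x in S, ∫ y in T, Wn n x y) Filter.atTop
      (nhds (∫ x in S, ∫ y in T, W x y))

/-- The envelope `⟨W⟩`: the set of graphons arising as weak* limits of versions of `W`. -/
def envelope (W : UI → UI → ℝ) : Set (UI → UI → ℝ) :=
  { U | IsGraphon U ∧ ∃ π : ℕ → MPB, WeakStarTendsto (fun n => vers W (π n).toFun) U }

/-- The `L¹` distance on `[0,1]²`. -/
def L1dist (U V : UI → UI → ℝ) : ℝ :=
  ∫ x : UI, ∫ y : UI, |U x y - V x y|

/-- The homomorphism density of the `m`-cycle `C_m` in `W`. -/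
def cycleDensity (m : ℕ) (W : UI → UI → ℝ) : ℝ :=
  ∫ x : Fin m → UI, ∏ i, W (x i) (x (finRotate m i))

/-- The homomorphism density `t(H,W)` of a finite simple graph `H` on `{0,…,n-1}` in `W`. -/
def homDensity {n : ℕ} (G : SimpleGraph (Fin n)) [DecidableRel G.Adj]
    (W : UI → UI → ℝ) : ℝ :=
  ∫ x : Fin n → UI, ∏ p : Fin n × Fin n,
    if p.1 < p.2 ∧ G.Adj p.1 p.2 then W (x p.1) (x p.2) else 1

/-- The decorated homomorphism density `t(H,w)` where each edge `{i,j}` of `H` carries the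
function `w i j`. -/
def homDensityDecorated {n : ℕ} (G : SimpleGraph (Fin n)) [DecidableRel G.Adj]
    (w : Fin n → Fin n → UI → UI → ℝ) : ℝ :=
  ∫ x : Fin n → UI, ∏ p : Fin n × Fin n,
    if p.1 < p.2 ∧ G.Adj p.1 p.2 then w p.1 p.2 (x p.1) (x p.2) else 1

/-- The number of edges `e(H)`. -/
def edgeCount {n : ℕ} (G : SimpleGraph (Fin n)) [DecidableRel G.Adj] : ℕ :=
  G.edgeFinset.card

/-- The average of `W` over `A × B` (zero if `A` or `B` is a null set). -/
def stepAvg (W : UI → UI → ℝ) (A B : Set UI) : ℝ :=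
  (∫ x in A, ∫ y in B, W x y) / ((volume A).toReal * (volume B).toReal)

/-- The stepping `W^{⋈P}` of `W` with respect to the finite partition of `[0,1]` given by the
fibers of the colouring `P : [0,1] → κ`. -/
def stepping {κ : Type*} (W : UI → UI → ℝ) (P : UI → κ) : UI → UI → ℝ :=
  fun x y => stepAvg W (P ⁻¹' {P x}) (P ⁻¹' {P y})

/-- A finite measurable partition of `[0,1]`, presented as a colouring with finitely many
colours, all of whose fibers are measurable. -/
def IsFinitePartition {κ : Type*} (P : UI → κ) : Prop :=
  Finite κ ∧ ∀ c : κ, MeasurableSet (P ⁻¹' {c})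

/-- A graphon parameter: a real-valued function on graphons invariant under cut distance `0`. -/
def GraphonParam (θ : (UI → UI → ℝ) → ℝ) : Prop :=
  ∀ U W, IsGraphon U → IsGraphon W → cutDist U W = 0 → θ U = θ W

/-- The structuredness order: `U ⪯ W` iff `⟨U⟩ ⊆ ⟨W⟩`. -/
def structLE (U W : UI → UI → ℝ) : Prop := envelope U ⊆ envelope W

/-- The strict structuredness order: `U ≺ W`. -/
def structLT (U W : UI → UI → ℝ) : Prop :=
  envelope U ⊆ envelope W ∧ ¬ envelope W ⊆ envelope U

/-- A cut distance compatible graphon parameter. -/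
def CutDistCompatible (θ : (UI → UI → ℝ) → ℝ) : Prop :=
  ∀ U W, IsGraphon U → IsGraphon W → structLE U W → θ U ≤ θ W

/-- A cut distance identifying graphon parameter. -/
def CutDistIdentifying (θ : (UI → UI → ℝ) → ℝ) : Prop :=
  ∀ U W, IsGraphon U → IsGraphon W → structLT U W → θ U < θ W

/-- `θ` is continuous with respect to the `L¹` norm on graphons. -/
def L1Continuous (θ : (UI → UI → ℝ) → ℝ) : Prop :=
  ∀ W, IsGraphon W → ∀ ε : ℝ, 0 < ε → ∃ δ : ℝ, 0 < δ ∧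
    ∀ U, IsGraphon U → L1dist U W < δ → |θ U - θ W| < ε

/-- `θ` is continuous with respect to the cut distance. -/
def CutDistContinuous (θ : (UI → UI → ℝ) → ℝ) : Prop :=
  ∀ (Wn : ℕ → UI → UI → ℝ) (W : UI → UI → ℝ), (∀ n, IsGraphon (Wn n)) → IsGraphon W →
    Filter.Tendsto (fun n => cutDist (Wn n) W) Filter.atTop (nhds 0) →
    Filter.Tendsto (fun n => θ (Wn n)) Filter.atTop (nhds (θ W))

/-- `H` is seminorming: `W ↦ |t(H,W)|^{1/e(H)}` is a seminorm on the space of kernels. -/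
def IsSeminorming {n : ℕ} (G : SimpleGraph (Fin n)) [DecidableRel G.Adj] : Prop :=
  0 < edgeCount G ∧
  (∀ W₁ W₂ : UI → UI → ℝ, IsKernel W₁ → IsKernel W₂ →
    |homDensity G (fun x y => W₁ x y + W₂ x y)| ^ ((edgeCount G : ℝ)⁻¹) ≤
      |homDensity G W₁| ^ ((edgeCount G : ℝ)⁻¹) + |homDensity G W₂| ^ ((edgeCount G : ℝ)⁻¹)) ∧
  (∀ (c : ℝ) (W : UI → UI → ℝ), IsKernel W →
    |homDensity G (fun x y => c * W x y)| ^ ((edgeCount G : ℝ)⁻¹) =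
      |c| * |homDensity G W| ^ ((edgeCount G : ℝ)⁻¹))


open Filter Function

open Filter Function

lemma integrable_of_bound {g : UI × UI → ℝ} (hg : AEStronglyMeasurable g volume) (C : ℝ)
    (hb : ∀ p, |g p| ≤ C) : Integrable g volume :=
  (integrable_const C).mono' hg (Filter.Eventually.of_forall fun p => by
    simpa [Real.norm_eq_abs] using hb p)

def MPB.emb (φ : MPB) : MeasurableEmbedding φ.toFun :=
  φ.measurePreserving.measurable.measurableEmbedding φ.bijective.injective

def MPB.mequiv (φ : MPB) : UI ≃ᵐ UI where
  toEquiv := Equiv.ofBijective φ.toFun φ.bijective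
  measurable_toFun := φ.measurePreserving.measurable
  measurable_invFun := by
    intro s hs
    have h1 : (Equiv.ofBijective φ.toFun φ.bijective).symm ⁻¹' s = φ.toFun '' s := by
      rw [← Equiv.image_eq_preimage_symm]
      rfl
    rw [h1]
    exact (MPB.emb φ).measurableSet_image.2 hs

def MPB.inv (φ : MPB) : MPB where
  toFun := φ.mequiv.symm
  bijective := φ.mequiv.symm.toEquiv.bijective
  measurePreserving :=
    MeasurePreserving.symm φ.mequiv (show MeasurePreserving φ.mequiv volume volume from
      φ.measurePreserving)

def MPB.comp (φ ψ : MPB) : MPB where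
  toFun := φ.toFun ∘ ψ.toFun
  bijective := φ.bijective.comp ψ.bijective
  measurePreserving := φ.measurePreserving.comp ψ.measurePreserving

def MPB.id' : MPB where
  toFun := id
  bijective := Function.bijective_id
  measurePreserving := MeasurePreserving.id volume

lemma MPB.toFun_comp_inv (φ : MPB) (x : UI) : φ.toFun (φ.inv.toFun x) = x :=
  φ.mequiv.apply_symm_apply x

def MPB.pmap (φ : MPB) : UI × UI → UI × UI := Prod.map φ.toFun φ.toFun

lemma MPB.pmap_measurable (φ : MPB) : Measurable φ.pmap :=
  (φ.measurePreserving.measurable.comp measurable_fst).prodMk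
    (φ.measurePreserving.measurable.comp measurable_snd)

lemma MPB.pmap_mp (φ : MPB) : MeasurePreserving φ.pmap volume volume :=
  φ.measurePreserving.prod φ.measurePreserving

lemma MPB.pmap_emb (φ : MPB) : MeasurableEmbedding φ.pmap :=
  φ.emb.prodMap φ.emb

lemma integral_comp_pmap (φ : MPB) (g : UI × UI → ℝ) :
    ∫ p, g (φ.pmap p) = ∫ p, g p :=
  φ.pmap_mp.integral_comp φ.pmap_emb g

lemma uncurry_vers (g : UI → UI → ℝ) (φ : MPB) :
    Function.uncurry (vers g φ.toFun) = Function.uncurry g ∘ φ.pmap := rfl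

lemma iint_set_eq {g : UI → UI → ℝ} (hm : Measurable (Function.uncurry g)) {C : ℝ}
    (hb : ∀ x y, |g x y| ≤ C) (S T : Set UI) :
    ∫ x in S, ∫ y in T, g x y = ∫ p in S ×ˢ T, Function.uncurry g p := by
  have hint : IntegrableOn (Function.uncurry g) (S ×ˢ T)
      ((volume : Measure UI).prod volume) :=
    (integrable_of_bound hm.aestronglyMeasurable C fun p => hb p.1 p.2).integrableOn
  have h := setIntegral_prod (Function.uncurry g) hint
  simpa [Function.uncurry, Measure.volume_eq_prod] using h.symm

lemma iint_full_eq {g : UI → UI → ℝ} (hm : Measurable (Function.uncurry g)) {C : ℝ}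
    (hb : ∀ x y, |g x y| ≤ C) :
    ∫ x : UI, ∫ y : UI, g x y = ∫ p : UI × UI, Function.uncurry g p := by
  have hint : Integrable (Function.uncurry g) ((volume : Measure UI).prod volume) :=
    integrable_of_bound hm.aestronglyMeasurable C fun p => hb p.1 p.2
  have h := integral_prod (Function.uncurry g) hint
  simpa [Function.uncurry, Measure.volume_eq_prod] using h.symm

section Core

variable (F : ℕ → UI × UI → ℝ) (f : UI × UI → ℝ)

/-- The key predicate: `h` is integrable and pairing against it converges. -/
def PP (h : UI × UI → ℝ) : Prop :=
  Integrable h volume ∧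
    Filter.Tendsto (fun n => ∫ p, F n p * h p) Filter.atTop (nhds (∫ p, f p * h p))

variable {F f}
variable (hF : ∀ n, Measurable (F n)) (hFb : ∀ n p, |F n p| ≤ 1)
    (hf : Measurable f) (hfb : ∀ p, |f p| ≤ 1)

lemma mul_integrable {h : UI × UI → ℝ} {G : UI × UI → ℝ} (hG : Measurable G)
    (hGb : ∀ p, |G p| ≤ 1) (hh : Integrable h volume) :
    Integrable (fun p => G p * h p) volume :=
  hh.bdd_mul (c := 1) hG.aestronglyMeasurable (Filter.Eventually.of_forall fun p => by simpa [Real.norm_eq_abs] using hGb p)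

lemma pair_diff_bound {G h g : UI × UI → ℝ} (hG : Measurable G) (hGb : ∀ p, |G p| ≤ 1)
    (hh : Integrable h volume) (hg : Integrable g volume) :
    |(∫ p, G p * h p) - ∫ p, G p * g p| ≤ ∫ p, |h p - g p| := by
  have hGh := mul_integrable hG hGb hh
  have hGg := mul_integrable hG hGb hg
  rw [← integral_sub hGh hGg]
  have h1 : |∫ p, (G p * h p - G p * g p)| ≤ ∫ p, |G p * h p - G p * g p| := by
    simpa [Real.norm_eq_abs] using
      norm_integral_le_integral_norm (μ := (volume : Measure (UI × UI)))
        (fun p => G p * h p - G p * g p)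
  refine h1.trans (integral_mono ((hGh.sub hGg).abs) ((hh.sub hg).abs) fun p => ?_)
  simp only [← mul_sub, abs_mul]
  calc |G p| * |h p - g p| ≤ 1 * |h p - g p| :=
        mul_le_mul_of_nonneg_right (hGb p) (abs_nonneg _)
    _ = |h p - g p| := one_mul _

include hF hFb hf hfb

lemma PP_closure {h : UI × UI → ℝ} (hint : Integrable h volume)
    (happrox : ∀ ε : ℝ, 0 < ε → ∃ g, PP F f g ∧ ∫ p, |h p - g p| < ε) : PP F f h := by
  refine ⟨hint, ?_⟩
  rw [Metric.tendsto_atTop]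
  intro ε hε
  obtain ⟨g, hPg, hg⟩ := happrox (ε/3) (by linarith)
  obtain ⟨N, hN⟩ := (Metric.tendsto_atTop.1 hPg.2) (ε/3) (by linarith)
  refine ⟨N, fun n hn => ?_⟩
  have h1 := pair_diff_bound (hF n) (hFb n) hint hPg.1
  have h2 := pair_diff_bound hf hfb hint hPg.1
  have h3 := hN n hn
  rw [Real.dist_eq] at h3 ⊢
  have t1 := abs_sub_le (∫ p, F n p * h p) (∫ p, F n p * g p) (∫ p, f p * h p)
  have t2 := abs_sub_le (∫ p, F n p * g p) (∫ p, f p * g p) (∫ p, f p * h p)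
  have t3 : |(∫ p, f p * g p) - ∫ p, f p * h p| = |(∫ p, f p * h p) - ∫ p, f p * g p| :=
    abs_sub_comm _ _
  linarith

lemma PP_zero : PP F f (fun _ => 0) := by
  refine ⟨integrable_zero _ _ _, ?_⟩
  simpa using tendsto_const_nhds

lemma PP_add {g h : UI × UI → ℝ} (hg : PP F f g) (hh : PP F f h) :
    PP F f (fun p => g p + h p) := by
  refine ⟨hg.1.add hh.1, ?_⟩
  have e1 : ∀ G : UI × UI → ℝ, Measurable G → (∀ p, |G p| ≤ 1) →
      ∫ p, G p * (g p + h p) = (∫ p, G p * g p) + ∫ p, G p * h p := by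
    intro G hGm hGb
    rw [← integral_add (mul_integrable hGm hGb hg.1) (mul_integrable hGm hGb hh.1)]
    simp [mul_add]
  have e2 : (fun n => ∫ p, F n p * (g p + h p)) =
      fun n => (∫ p, F n p * g p) + ∫ p, F n p * h p := by
    funext n; exact e1 (F n) (hF n) (hFb n)
  rw [e2, e1 f hf hfb]
  exact hg.2.add hh.2

lemma PP_smul (c : ℝ) {g : UI × UI → ℝ} (hg : PP F f g) : PP F f (fun p => c * g p) := by
  refine ⟨hg.1.const_mul c, ?_⟩
  have e1 : ∀ G : UI × UI → ℝ, ∫ p, G p * (c * g p) = c * ∫ p, G p * g p := by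
    intro G
    rw [← integral_const_mul]
    congr 1; funext p; ring
  simp only [e1]
  exact hg.2.const_mul c

lemma PP_sub {g h : UI × UI → ℝ} (hg : PP F f g) (hh : PP F f h) :
    PP F f (fun p => g p - h p) := by
  have := PP_add hF hFb hf hfb hg (PP_smul hF hFb hf hfb (-1) hh)
  simpa [sub_eq_add_neg] using this

lemma PP_sum {ι : Type*} (s : Finset ι) (g : ι → UI × UI → ℝ)
    (hg : ∀ i ∈ s, PP F f (g i)) : PP F f (fun p => ∑ i ∈ s, g i p) := by
  classical
  induction s using Finset.induction_on with
  | empty => simpa using PP_zero hF hFb hf hfb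
  | insert a s' hnotmem ih =>
    simp only [Finset.sum_insert hnotmem]
    exact PP_add hF hFb hf hfb (hg a (Finset.mem_insert_self a s'))
      (ih fun i hi => hg i (Finset.mem_insert_of_mem hi))

end Core
section Core2

variable {F : ℕ → UI × UI → ℝ} {f : UI × UI → ℝ}
variable (hF : ∀ n, Measurable (F n)) (hFb : ∀ n p, |F n p| ≤ 1)
    (hf : Measurable f) (hfb : ∀ p, |f p| ≤ 1)
    (hconv : ∀ S T : Set UI, MeasurableSet S → MeasurableSet T →
      Filter.Tendsto (fun n => ∫ p in S ×ˢ T, F n p) Filter.atTop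
        (nhds (∫ p in S ×ˢ T, f p)))

include hF hFb hf hfb hconv

lemma PP_rect {S T : Set UI} (hS : MeasurableSet S) (hT : MeasurableSet T) :
    PP F f ((S ×ˢ T).indicator fun _ => (1:ℝ)) := by
  have key : ∀ G : UI × UI → ℝ,
      ∫ p, G p * (S ×ˢ T).indicator (fun _ => (1:ℝ)) p = ∫ p in S ×ˢ T, G p := by
    intro G
    rw [← integral_indicator (hS.prod hT)]
    congr 1
    funext p
    by_cases hp : p ∈ S ×ˢ T <;>
      simp [Set.indicator_of_mem, Set.indicator_of_notMem, hp]
  refine ⟨(integrable_const (1:ℝ)).indicator (hS.prod hT), ?_⟩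
  simp only [key]
  exact hconv S T hS hT

lemma PP_indicator : ∀ A : Set (UI × UI), MeasurableSet A →
    PP F f (A.indicator fun _ => (1:ℝ)) := by
  have hgen : (Prod.instMeasurableSpace : MeasurableSpace (UI × UI)) =
      MeasurableSpace.generateFrom
        (Set.image2 (· ×ˢ ·) { s : Set UI | MeasurableSet s }
          { t : Set UI | MeasurableSet t }) := generateFrom_prod.symm
  intro A hA
  refine MeasurableSpace.induction_on_inter (C := fun A _ => PP F f (A.indicator fun _ => (1:ℝ))) hgen isPiSystem_prod ?_ ?_ ?_ ?_ A hA
  · simpa using PP_zero hF hFb hf hfb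
  · rintro t ⟨S, hS, T, hT, rfl⟩
    exact PP_rect hF hFb hf hfb hconv hS hT
  · intro t ht hPt
    have huniv : PP F f ((Set.univ : Set (UI × UI)).indicator fun _ => (1:ℝ)) := by
      have := PP_rect hF hFb hf hfb hconv MeasurableSet.univ MeasurableSet.univ
      simpa [Set.univ_prod_univ] using this
    have := PP_sub hF hFb hf hfb huniv hPt
    have e : (fun p => (Set.univ : Set (UI × UI)).indicator (fun _ => (1:ℝ)) p -
        t.indicator (fun _ => (1:ℝ)) p) = tᶜ.indicator fun _ => (1:ℝ) := by
      funext p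
      by_cases hp : p ∈ t <;>
        simp [Set.indicator_of_mem, Set.indicator_of_notMem, hp]
    rwa [e] at this
  · intro g hdisj hgm hPg
    set A := ⋃ i, g i with hA
    have hAm : MeasurableSet A := MeasurableSet.iUnion hgm
    refine PP_closure hF hFb hf hfb ((integrable_const (1:ℝ)).indicator hAm) ?_
    intro ε hε
    -- B N = union of first N pieces
    set B : ℕ → Set (UI × UI) := fun N => ⋃ i ∈ Finset.range N, g i with hB
    have hBm : ∀ N, MeasurableSet (B N) := fun N =>
      (Finset.range N).measurableSet_biUnion fun i _ => hgm i
    have hBsub : ∀ N, B N ⊆ A := fun N =>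
      Set.iUnion₂_subset fun i _ => Set.subset_iUnion g i
    -- the measures of A \ B N tend to 0
    have hanti : Antitone fun N => A \ B N := by
      intro m n hmn
      apply Set.diff_subset_diff_right
      exact Set.biUnion_subset_biUnion_left (Finset.range_subset_range.2 hmn)
    have hiInter : (⋂ N, A \ B N) = ∅ := by
      rw [← Set.diff_iUnion]
      have : (⋃ N, B N) = A := by
        apply Set.Subset.antisymm (Set.iUnion_subset hBsub)
        intro x hx
        obtain ⟨i, hi⟩ := Set.mem_iUnion.1 hx
        exact Set.mem_iUnion.2 ⟨i + 1, Set.mem_biUnion (Finset.mem_range.2 (Nat.lt_succ_self i)) hi⟩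
      rw [this, Set.diff_self]
    have hmeas0 : Filter.Tendsto (fun N => (volume (A \ B N)).toReal) Filter.atTop (nhds 0) := by
      have h1 : Filter.Tendsto (fun N => volume (A \ B N)) Filter.atTop (nhds 0) := by
        have := tendsto_measure_iInter_atTop (μ := (volume : Measure (UI × UI)))
          (s := fun N => A \ B N)
          (fun N => ((hAm.diff (hBm N)).nullMeasurableSet))
          hanti ⟨0, measure_ne_top _ _⟩
        rwa [hiInter, measure_empty] at this
      have h2 := (ENNReal.tendsto_toReal (ENNReal.zero_ne_top)).comp h1
      exact h2
    obtain ⟨N, hN⟩ := (hmeas0.eventually_lt_const hε).exists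
    refine ⟨fun p => ∑ i ∈ Finset.range N, (g i).indicator (fun _ => (1:ℝ)) p,
      PP_sum hF hFb hf hfb _ _ (fun i _ => hPg i), ?_⟩
    have hptwise : ∀ p, |A.indicator (fun _ => (1:ℝ)) p -
        ∑ i ∈ Finset.range N, (g i).indicator (fun _ => (1:ℝ)) p| ≤
        (A \ B N).indicator (fun _ => (1:ℝ)) p := by
      intro p
      by_cases hpB : p ∈ B N
      · obtain ⟨i, hiN, hpi⟩ := Set.mem_iUnion₂.1 hpB
        have hsum : ∑ j ∈ Finset.range N, (g j).indicator (fun _ => (1:ℝ)) p = 1 := by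
          rw [Finset.sum_eq_single_of_mem i hiN]
          · simp [Set.indicator_of_mem hpi]
          · intro j hj hji
            have : p ∉ g j := fun hpj =>
              Set.disjoint_left.1 (hdisj hji) hpj hpi
            simp [Set.indicator_of_notMem this]
        have hpA : p ∈ A := hBsub N hpB
        have hpnot : p ∉ A \ B N := fun h => h.2 hpB
        simp [hsum, Set.indicator_of_mem hpA, Set.indicator_of_notMem hpnot]
      · have hsum : ∑ j ∈ Finset.range N, (g j).indicator (fun _ => (1:ℝ)) p = 0 := by
          apply Finset.sum_eq_zero
          intro j hj
          have : p ∉ g j := fun hpj => hpB (Set.mem_biUnion hj hpj)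
          simp [Set.indicator_of_notMem this]
        by_cases hpA : p ∈ A
        · have : p ∈ A \ B N := ⟨hpA, hpB⟩
          simp [hsum, Set.indicator_of_mem hpA, Set.indicator_of_mem this]
        · have : p ∉ A \ B N := fun h => hpA h.1
          simp [hsum, Set.indicator_of_notMem hpA, Set.indicator_of_notMem this]
    have hint1 : Integrable (fun p => |A.indicator (fun _ => (1:ℝ)) p -
        ∑ i ∈ Finset.range N, (g i).indicator (fun _ => (1:ℝ)) p|) volume := by
      apply Integrable.abs
      exact (((integrable_const (1:ℝ)).indicator hAm).sub
        (integrable_finset_sum _ fun i _ => (integrable_const (1:ℝ)).indicator (hgm i)))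
    have hint2 : Integrable ((A \ B N).indicator fun _ => (1:ℝ)) volume :=
      (integrable_const (1:ℝ)).indicator (hAm.diff (hBm N))
    calc ∫ p, |A.indicator (fun _ => (1:ℝ)) p -
          ∑ i ∈ Finset.range N, (g i).indicator (fun _ => (1:ℝ)) p|
        ≤ ∫ p, (A \ B N).indicator (fun _ => (1:ℝ)) p :=
          integral_mono hint1 hint2 hptwise
      _ = (volume (A \ B N)).toReal := by
          rw [integral_indicator (hAm.diff (hBm N))]
          simp [Measure.real]
      _ < ε := hN

end Core2
section Core3

variable {F : ℕ → UI × UI → ℝ} {f : UI × UI → ℝ}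
variable (hF : ∀ n, Measurable (F n)) (hFb : ∀ n p, |F n p| ≤ 1)
    (hf : Measurable f) (hfb : ∀ p, |f p| ≤ 1)
    (hconv : ∀ S T : Set UI, MeasurableSet S → MeasurableSet T →
      Filter.Tendsto (fun n => ∫ p in S ×ˢ T, F n p) Filter.atTop
        (nhds (∫ p in S ×ˢ T, f p)))

include hF hFb hf hfb hconv

lemma PP_bdd_meas {h : UI × UI → ℝ} (hm : Measurable h) (hb : ∀ p, |h p| ≤ 1) :
    PP F f h := by
  have hint : Integrable h volume := integrable_of_bound hm.aestronglyMeasurable 1 hb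
  refine PP_closure hF hFb hf hfb hint ?_
  intro ε hε
  obtain ⟨N, hN0, hN⟩ : ∃ N : ℕ, 0 < N ∧ 1 / (N : ℝ) < ε := by
    obtain ⟨N, hN⟩ := exists_nat_one_div_lt hε
    exact ⟨N + 1, Nat.succ_pos N, by exact_mod_cast hN⟩
  have hNpos : (0:ℝ) < N := by exact_mod_cast hN0
  set s : UI × UI → ℝ := fun p => (⌊h p * N⌋ : ℝ) / N with hs
  have hfloor_mem : ∀ p, ⌊h p * N⌋ ∈ Finset.Icc (-(N:ℤ)) (N:ℤ) := by
    intro p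
    have hb1 : -(1:ℝ) ≤ h p := neg_le_of_abs_le (hb p)
    have hb2 : h p ≤ 1 := le_of_abs_le (hb p)
    have h1 : -(N:ℝ) ≤ h p * N := by nlinarith
    have h2 : h p * N ≤ (N:ℝ) := by nlinarith
    rw [Finset.mem_Icc]
    constructor
    · exact Int.le_floor.2 (by exact_mod_cast h1)
    · calc ⌊h p * N⌋ ≤ ⌊(N:ℝ)⌋ := Int.floor_le_floor h2
        _ = (N:ℤ) := by exact_mod_cast Int.floor_intCast (N:ℤ)
  have hPs : PP F f s := by
    have hrepr : s = fun p => ∑ k ∈ Finset.Icc (-(N:ℤ)) (N:ℤ),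
        (if ⌊h p * N⌋ = k then ((k:ℝ)/N) else 0) := by
      funext p
      rw [Finset.sum_ite_eq]
      simp [hfloor_mem p, hs]
    rw [hrepr]
    refine PP_sum hF hFb hf hfb _ _ ?_
    intro k _
    have hAk : MeasurableSet {p : UI × UI | ⌊h p * N⌋ = k} := by
      have hm2 : Measurable fun p : UI × UI => ⌊h p * N⌋ :=
        Measurable.floor (hm.mul measurable_const)
      exact hm2 (measurableSet_singleton k)
    have heq : (fun p : UI × UI => if ⌊h p * N⌋ = k then ((k:ℝ)/N) else 0) =
        fun p => ((k:ℝ)/N) *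
          ({p : UI × UI | ⌊h p * N⌋ = k}.indicator (fun _ => (1:ℝ)) p) := by
      funext p
      by_cases hp : ⌊h p * N⌋ = k <;>
        simp [hp, Set.indicator_of_mem, Set.indicator_of_notMem, Set.mem_setOf_eq]
    rw [heq]
    exact PP_smul hF hFb hf hfb _ (PP_indicator hF hFb hf hfb hconv _ hAk)
  refine ⟨s, hPs, ?_⟩
  have hptwise : ∀ p, |h p - s p| ≤ 1 / N := by
    intro p
    have h1 : (⌊h p * N⌋ : ℝ) ≤ h p * N := Int.floor_le _
    have h2 : h p * N < ⌊h p * N⌋ + 1 := Int.lt_floor_add_one _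
    have e : h p - s p = (h p * N - ⌊h p * N⌋) / N := by
      rw [hs]
      field_simp
    rw [e, abs_of_nonneg (div_nonneg (by linarith) hNpos.le), div_le_div_iff₀ hNpos hNpos]
    nlinarith
  have hsint : Integrable s volume := by
    refine integrable_of_bound ?_ 1 ?_
    · have hm2 : Measurable fun p : UI × UI => ⌊h p * N⌋ :=
        Measurable.floor (hm.mul measurable_const)
      exact ((measurable_from_top (f := fun k : ℤ => ((k:ℝ)/N))).comp hm2).aestronglyMeasurable
    · intro p
      have hmem := hfloor_mem p
      rw [Finset.mem_Icc] at hmem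
      have habs : |(⌊h p * N⌋:ℝ)| ≤ (N:ℝ) := by
        rw [abs_le]
        constructor
        · exact_mod_cast hmem.1
        · exact_mod_cast hmem.2
      rw [hs, abs_div, abs_of_pos hNpos, div_le_one hNpos]
      exact habs
  calc ∫ p, |h p - s p| ≤ ∫ _p : UI × UI, 1/(N:ℝ) :=
        integral_mono (hint.sub hsint).abs (integrable_const _) hptwise
    _ = 1/(N:ℝ) := by simp
    _ < ε := hN

end Core3
open Filter in
theorem L2_norm_lt_of_structLT' (U W : UI → UI → ℝ) (hU : IsGraphon U) (hW : IsGraphon W)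
    (hUW : structLT U W) :
    Real.sqrt (∫ x : UI, ∫ y : UI, (U x y) ^ 2) <
      Real.sqrt (∫ x : UI, ∫ y : UI, (W x y) ^ 2) := by
  classical
  have hUb : ∀ x y, |U x y| ≤ 1 := fun x y => by
    have h := hU.2.2 x y; rw [abs_le]; exact ⟨by linarith [h.1], h.2⟩
  have hWb : ∀ x y, |W x y| ≤ 1 := fun x y => by
    have h := hW.2.2 x y; rw [abs_le]; exact ⟨by linarith [h.1], h.2⟩
  set f : UI × UI → ℝ := Function.uncurry U with hfdef
  set w : UI × UI → ℝ := Function.uncurry W with hwdef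
  have hfm : Measurable f := hU.1
  have hwm : Measurable w := hW.1
  have hfb : ∀ p : UI × UI, |f p| ≤ 1 := fun p => hUb p.1 p.2
  have hwb : ∀ p : UI × UI, |w p| ≤ 1 := fun p => hWb p.1 p.2
  have hfint : Integrable f volume := integrable_of_bound hfm.aestronglyMeasurable 1 hfb
  -- U belongs to its own envelope, hence to that of W
  have hUenvU : U ∈ envelope U := by
    refine ⟨hU, fun _ => MPB.id', ?_⟩
    intro S T hS hT
    exact tendsto_const_nhds
  obtain ⟨-, π, hπ⟩ := hUW.1 hUenvU
  set F : ℕ → UI × UI → ℝ := fun n => Function.uncurry (vers W (π n).toFun) with hFdef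
  have hFm : ∀ n, Measurable (F n) := fun n => hwm.comp (π n).pmap_measurable
  have hFb : ∀ (n : ℕ) (p : UI × UI), |F n p| ≤ 1 := fun n p => hWb _ _
  have hFint : ∀ n, Integrable (F n) volume :=
    fun n => integrable_of_bound (hFm n).aestronglyMeasurable 1 (hFb n)
  have hconv : ∀ S T : Set UI, MeasurableSet S → MeasurableSet T →
      Tendsto (fun n => ∫ p in S ×ˢ T, F n p) atTop (nhds (∫ p in S ×ˢ T, f p)) := by
    intro S T hS hT
    have h1 := hπ S T hS hT
    have h2 : ∀ n, ∫ x in S, ∫ y in T, vers W (π n).toFun x y = ∫ p in S ×ˢ T, F n p :=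
      fun n => iint_set_eq (g := vers W (π n).toFun) (hFm n) (C := 1)
        (fun x y => hWb _ _) S T
    have h3 : ∫ x in S, ∫ y in T, U x y = ∫ p in S ×ˢ T, f p :=
      iint_set_eq (g := U) hfm (C := 1) hUb S T
    rw [h3] at h1
    rwa [show (fun n => ∫ x in S, ∫ y in T, vers W (π n).toFun x y)
      = fun n => ∫ p in S ×ˢ T, F n p from funext h2] at h1
  -- pairing convergence against f itself
  have hPf : PP F f f := PP_bdd_meas hFm hFb hfm hfb hconv hfm hfb
  set cU : ℝ := ∫ p, f p * f p with hcU
  set cW : ℝ := ∫ p, w p * w p with hcW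
  have ha : Tendsto (fun n => ∫ p, F n p * f p) atTop (nhds cU) := hPf.2
  have hFnorm : ∀ n, ∫ p, F n p * F n p = cW := by
    intro n
    have h0 : (fun p => F n p * F n p) = (fun q => w q * w q) ∘ (π n).pmap := rfl
    rw [hcW, h0]
    exact integral_comp_pmap (π n) fun q => w q * w q
  have hexp : ∀ n, ∫ p, (F n p - f p) * (F n p - f p)
      = cW - 2 * (∫ p, F n p * f p) + cU := by
    intro n
    have hint1 : Integrable (fun p => F n p * F n p) volume :=
      mul_integrable (hFm n) (hFb n) (hFint n)
    have hint2 : Integrable (fun p => F n p * f p) volume :=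
      mul_integrable (hFm n) (hFb n) hfint
    have hint3 : Integrable (fun p => f p * f p) volume := mul_integrable hfm hfb hfint
    calc ∫ p, (F n p - f p) * (F n p - f p)
        = ∫ p, (F n p * F n p - 2 * (F n p * f p) + f p * f p) := by
          congr 1; funext p; ring
      _ = (∫ p, (F n p * F n p - 2 * (F n p * f p))) + ∫ p, f p * f p :=
          integral_add (hint1.sub (hint2.const_mul 2)) hint3
      _ = ((∫ p, F n p * F n p) - ∫ p, 2 * (F n p * f p)) + ∫ p, f p * f p := by
          rw [integral_sub hint1 (hint2.const_mul 2)]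
      _ = cW - 2 * (∫ p, F n p * f p) + cU := by
          rw [integral_const_mul, hFnorm n, hcU]
  have hE : Tendsto (fun n => ∫ p, (F n p - f p) * (F n p - f p)) atTop
      (nhds (cW - 2 * cU + cU)) := by
    simp only [hexp]
    exact (tendsto_const_nhds.sub (ha.const_mul 2)).add tendsto_const_nhds
  have hcUnonneg : 0 ≤ cU := integral_nonneg fun p => mul_self_nonneg _
  have hle : cU ≤ cW := by
    have hnn : ∀ n, 0 ≤ ∫ p, (F n p - f p) * (F n p - f p) :=
      fun n => integral_nonneg fun p => mul_self_nonneg _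
    have := ge_of_tendsto' hE hnn
    linarith
  have hne : cU ≠ cW := by
    intro heq
    have h0 : cW - 2 * cU + cU = 0 := by rw [← heq]; ring
    have hE0 := hE
    rw [h0] at hE0
    -- L¹ smallness of F n - f along a subsequence
    have hd : ∀ ε : ℝ, 0 < ε → ∃ n, ∫ p, |F n p - f p| < ε := by
      intro ε hε
      obtain ⟨n, hn⟩ := (hE0.eventually_lt_const
        (show (0:ℝ) < ε^2/2 by positivity)).exists
      refine ⟨n, ?_⟩
      have hintFf : Integrable (fun p => F n p - f p) volume := (hFint n).sub hfint
      have hFfm : Measurable fun p => F n p - f p := (hFm n).sub hfm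
      have hint2 : Integrable (fun p => (F n p - f p) * (F n p - f p)) volume :=
        integrable_of_bound (hFfm.mul hFfm).aestronglyMeasurable 4 (fun p => by
          have h1 := hFb n p
          have h2 := hfb p
          rw [abs_mul]
          nlinarith [abs_nonneg (F n p - f p), abs_sub (F n p) (f p)])
      have hpt : ∀ p, |F n p - f p| ≤ ε/2 + (F n p - f p) * (F n p - f p) / ε := by
        intro p
        have h1 : ε * |F n p - f p| ≤ ε^2/2 + (F n p - f p) * (F n p - f p) := by
          nlinarith [sq_nonneg (|F n p - f p| - ε), abs_mul_abs_self (F n p - f p)]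
        calc |F n p - f p| = (ε * |F n p - f p|)/ε := by field_simp
          _ ≤ (ε^2/2 + (F n p - f p) * (F n p - f p))/ε := by gcongr
          _ = ε/2 + (F n p - f p) * (F n p - f p)/ε := by field_simp
      have heps : (ε^2/2)/ε = ε/2 := by field_simp
      calc ∫ p, |F n p - f p|
          ≤ ∫ p, (ε/2 + (F n p - f p) * (F n p - f p) / ε) :=
            integral_mono hintFf.abs
              ((integrable_const (ε/2)).add (hint2.div_const ε)) hpt
        _ = ε/2 + (∫ p, (F n p - f p) * (F n p - f p)) / ε := by
            rw [integral_add (integrable_const (ε/2)) (hint2.div_const ε), integral_const]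
            simp [integral_div]
        _ < ε/2 + (ε^2/2)/ε := by gcongr
        _ = ε := by rw [heps]; ring
    -- envelope W is contained in envelope U, contradiction
    have hsub : envelope W ⊆ envelope U := by
      rintro V ⟨hV, ρ, hρ⟩
      have hpick : ∀ m : ℕ, ∃ n, ∫ p, |F n p - f p| < 1/((m:ℝ)+1) :=
        fun m => hd _ (by positivity)
      choose nn hnn using hpick
      set τ : ℕ → MPB := fun m => MPB.comp ((π (nn m)).inv) (ρ m) with hτ
      refine ⟨hV, τ, ?_⟩
      intro S T hS hT
      have hBtend := hρ S T hS hT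
      have hkey : ∀ m, |(∫ x in S, ∫ y in T, vers U (τ m).toFun x y) -
          ∫ x in S, ∫ y in T, vers W (ρ m).toFun x y| ≤ 1/((m:ℝ)+1) := by
        intro m
        set n := nn m with hn
        have hcompfun : ∀ x y, vers W (ρ m).toFun x y = (F n ∘ (τ m).pmap) (x, y) := by
          intro x y
          show W ((ρ m).toFun x) ((ρ m).toFun y)
            = W ((π n).toFun ((τ m).toFun x)) ((π n).toFun ((τ m).toFun y))
          have hc : ∀ z, (π n).toFun ((τ m).toFun z) = (ρ m).toFun z := fun z =>
            (π n).toFun_comp_inv ((ρ m).toFun z)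
          rw [hc, hc]
        have hτmeas : Measurable (Function.uncurry (vers U (τ m).toFun)) :=
          hfm.comp (τ m).pmap_measurable
        have hρmeas : Measurable (Function.uncurry (vers W (ρ m).toFun)) :=
          hwm.comp (ρ m).pmap_measurable
        have e1 : ∫ x in S, ∫ y in T, vers U (τ m).toFun x y
            = ∫ p in S ×ˢ T, (f ∘ (τ m).pmap) p :=
          iint_set_eq (g := vers U (τ m).toFun) hτmeas (C := 1)
            (fun x y => hUb _ _) S T
        have e2 : ∫ x in S, ∫ y in T, vers W (ρ m).toFun x y
            = ∫ p in S ×ˢ T, (F n ∘ (τ m).pmap) p := by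
          rw [iint_set_eq (g := vers W (ρ m).toFun) hρmeas (C := 1)
            (fun x y => hWb _ _) S T]
          congr 1
          funext p
          exact hcompfun p.1 p.2
        rw [e1, e2]
        have hint1 : Integrable (f ∘ (τ m).pmap) volume :=
          integrable_of_bound (hfm.comp (τ m).pmap_measurable).aestronglyMeasurable 1
            (fun p => hfb _)
        have hint2 : Integrable (F n ∘ (τ m).pmap) volume :=
          integrable_of_bound ((hFm n).comp (τ m).pmap_measurable).aestronglyMeasurable 1
            (fun p => hFb n _)
        have step1 : |(∫ p in S ×ˢ T, (f ∘ (τ m).pmap) p) -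
            ∫ p in S ×ˢ T, (F n ∘ (τ m).pmap) p|
            ≤ ∫ p, |(f ∘ (τ m).pmap) p - (F n ∘ (τ m).pmap) p| := by
          rw [← integral_sub hint1.integrableOn hint2.integrableOn]
          have hh1 : |∫ p in S ×ˢ T, ((f ∘ (τ m).pmap) p - (F n ∘ (τ m).pmap) p)|
              ≤ ∫ p in S ×ˢ T, |(f ∘ (τ m).pmap) p - (F n ∘ (τ m).pmap) p| := by
            simpa [Real.norm_eq_abs] using norm_integral_le_integral_norm
              (μ := (volume : Measure (UI × UI)).restrict (S ×ˢ T))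
              (fun p => (f ∘ (τ m).pmap) p - (F n ∘ (τ m).pmap) p)
          refine hh1.trans (setIntegral_le_integral (hint1.sub hint2).abs ?_)
          exact Filter.Eventually.of_forall fun p => abs_nonneg _
        have step2 : ∫ p, |(f ∘ (τ m).pmap) p - (F n ∘ (τ m).pmap) p|
            = ∫ p, |F n p - f p| := by
          have h0 : (fun p => |(f ∘ (τ m).pmap) p - (F n ∘ (τ m).pmap) p|)
              = (fun q => |f q - F n q|) ∘ (τ m).pmap := rfl
          rw [h0]
          rw [show ∫ p, ((fun q => |f q - F n q|) ∘ (τ m).pmap) p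
            = ∫ q, |f q - F n q| from integral_comp_pmap (τ m) fun q => |f q - F n q|]
          congr 1
          funext q
          exact abs_sub_comm _ _
        exact step1.trans (step2 ▸ (hnn m).le)
      have hdiff : Tendsto (fun m => (∫ x in S, ∫ y in T, vers U (τ m).toFun x y) -
          ∫ x in S, ∫ y in T, vers W (ρ m).toFun x y) atTop (nhds 0) := by
        apply squeeze_zero_norm ?_ tendsto_one_div_add_atTop_nhds_zero_nat
        intro m
        simpa [Real.norm_eq_abs] using hkey m
      have hsum := hBtend.add hdiff
      rw [add_zero] at hsum
      have e : (fun m => (∫ x in S, ∫ y in T, vers W (ρ m).toFun x y) +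
          ((∫ x in S, ∫ y in T, vers U (τ m).toFun x y) -
            ∫ x in S, ∫ y in T, vers W (ρ m).toFun x y))
          = fun m => ∫ x in S, ∫ y in T, vers U (τ m).toFun x y := by
        funext m; ring
      rwa [e] at hsum
    exact hUW.2 hsub
  have hlt : cU < cW := lt_of_le_of_ne hle hne
  have mul_abs_le_one : ∀ a : ℝ, |a| ≤ 1 → |a * a| ≤ 1 := fun a h => by
    rw [abs_mul]
    nlinarith [abs_nonneg a]
  have g1 : ∫ x : UI, ∫ y : UI, (U x y)^2 = cU := by
    have h := iint_full_eq (g := fun x y => U x y * U x y) (hfm.mul hfm) (C := 1)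
      (fun x y => mul_abs_le_one _ (hUb x y))
    rw [hcU]
    rw [show (fun x : UI => ∫ y : UI, (U x y)^2) = fun x : UI => ∫ y : UI, U x y * U x y from
      funext fun x => by simp only [pow_two]]
    exact h
  have g2 : ∫ x : UI, ∫ y : UI, (W x y)^2 = cW := by
    have h := iint_full_eq (g := fun x y => W x y * W x y) (hwm.mul hwm) (C := 1)
      (fun x y => mul_abs_le_one _ (hWb x y))
    rw [hcW]
    rw [show (fun x : UI => ∫ y : UI, (W x y)^2) = fun x : UI => ∫ y : UI, W x y * W x y from
      funext fun x => by simp only [pow_two]]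
    exact h
  rw [g1, g2]
  exact Real.sqrt_lt_sqrt hcUnonneg hlt

/-- If `U ≺ W` are graphons, then `‖U‖₂ < ‖W‖₂`. -/
theorem L2_norm_lt_of_structLT (U W : UI → UI → ℝ) (hU : IsGraphon U) (hW : IsGraphon W)
    (hUW : structLT U W) :
    Real.sqrt (∫ x : UI, ∫ y : UI, (U x y) ^ 2) <
      Real.sqrt (∫ x : UI, ∫ y : UI, (W x y) ^ 2) := by
  exact L2_norm_lt_of_structLT' U W hU hW hUW

end
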